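/- arXiv:2102.03486 — 2 statements merged into one kernel-verified Lean document; each statement's English description precedes it below -/
import Mathlib

section
/- For all positive integers n and k, F^d_k(n) = G°_k(n) − G°_k(n − k): the total number of parts with first coordinate k over all b-colored distinct partitions of n equals the difference of the numbers of colored parts repeated at least k times in all b-colored odd partitions of n and of n − k. -/
/-- A colored partition of `n`, where the part `j` comes in `b j` colors, is a multiset of
pairs `(j, c)` with `j` a positive integer and `c ∈ {1, …, b j}`, whose weight (the sum of
the first coordinates, counted with multiplicity) is `n`. -/
def IsColoredPartition (b : ℕ → ℕ) (n : ℕ) (M : Multiset (ℕ × ℕ)) : Prop :=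
  (∀ p ∈ M, 0 < p.1 ∧ 1 ≤ p.2 ∧ p.2 ≤ b p.1) ∧ (M.map Prod.fst).sum = n

/-- A colored partition in which every colored part occurs at most once. -/
def IsColoredDistinctPartition (b : ℕ → ℕ) (n : ℕ) (M : Multiset (ℕ × ℕ)) : Prop :=
  IsColoredPartition b n M ∧ M.Nodup

/-- `h^d n`: the number of `b`-colored partitions of `n` with all colored parts distinct. -/
noncomputable def coloredhDist (b : ℕ → ℕ) (n : ℕ) : ℕ :=
  Nat.card {M // IsColoredDistinctPartition b n M}

/-- `F^d k n`: the total number of parts with first coordinate `k` over all `b`-colored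
distinct partitions of `n`. -/
noncomputable def coloredFDist (b : ℕ → ℕ) (k n : ℕ) : ℕ :=
  ∑ᶠ M ∈ {M | IsColoredDistinctPartition b n M}, (Multiset.filter (fun p => p.1 = k) M).card

/-- A colored partition in which every part has odd first coordinate. -/
def IsColoredOddPartition (b : ℕ → ℕ) (n : ℕ) (M : Multiset (ℕ × ℕ)) : Prop :=
  IsColoredPartition b n M ∧ ∀ p ∈ M, Odd p.1

/-- `G° k n`: the total number of distinct colored parts occurring with multiplicity at
least `k`, summed over all `b`-colored odd partitions of `n`. -/
noncomputable def coloredGOdd (b : ℕ → ℕ) (k n : ℕ) : ℕ :=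
  ∑ᶠ M ∈ {M | IsColoredOddPartition b n M},
    (M.toFinset.filter fun p => k ≤ M.count p).card


/-!
Both `F^d_k` and `n ↦ G°_k(n) - G°_k(n - k)` vanish below `k` and satisfy
`X(m + k) + X(m) = b · d(m)`, where `d(m)` counts the `b`-colored distinct partitions of `m`;
hence they agree.

For `F^d_k`, adding a part `(k, c)` to a distinct partition of `m` not containing it is a bijection
onto the distinct partitions of `m + k` containing it.

For `G°_k`, removing `k` copies of a colored odd part `(j, c)` shows that it occurs at least `k`
times in exactly `o(n - kj)` odd partitions of `n`, where `o` counts the `b`-colored odd partitions.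
So `G°_k(n) = b · ∑_{j odd} o(n - kj)`, which telescopes to `G°_k(m + k) - G°_k(m - k) = b · o(m)`.

Finally `d = o`: splitting a colored partition into its color classes reduces this to Euler's
theorem, one color at a time.
-/

open Finset

namespace Multiset

variable {α β : Type*}

def ofColorFibers (C : Finset β) (f : C → Multiset α) : Multiset (α × β) :=
  ∑ c, (f c).map (·, c.1)

theorem snd_mem_of_mem_ofColorFibers {C : Finset β} {f : C → Multiset α} {p : α × β}
    (hp : p ∈ ofColorFibers C f) : p.2 ∈ C := by
  obtain ⟨c, -, hc⟩ := mem_sum.mp hp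
  obtain ⟨x, -, rfl⟩ := mem_map.mp hc
  exact c.2

theorem map_fst_ofColorFibers (C : Finset β) (f : C → Multiset α) :
    (ofColorFibers C f).map Prod.fst = ∑ c, f c := by
  rw [ofColorFibers, ← coe_mapAddMonoidHom, map_sum]
  simp [map_map]

variable [DecidableEq β]

def colorFiber (M : Multiset (α × β)) (c : β) : Multiset α :=
  (M.filter (·.2 = c)).map Prod.fst

theorem mem_colorFiber {M : Multiset (α × β)} {a : α} {c : β} :
    a ∈ colorFiber M c ↔ (a, c) ∈ M := by
  simp [colorFiber]

theorem count_colorFiber [DecidableEq α] (M : Multiset (α × β)) (a : α) (c : β) :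
    (colorFiber M c).count a = M.count (a, c) := by
  rw [colorFiber, count_map, filter_filter, count_eq_card_filter_eq]
  congr 1
  exact filter_congr fun p _ => by grind

theorem count_ofColorFibers [DecidableEq α] (C : Finset β) (f : C → Multiset α) (a : α) (c : C) :
    (ofColorFibers C f).count (a, (c : β)) = (f c).count a := by
  rw [ofColorFibers, count_sum', Finset.sum_eq_single c]
  · exact count_map_eq_count' _ _ (fun x y h => (Prod.ext_iff.mp h).1) a
  · intro d _ hdc
    refine count_eq_zero.mpr fun h => hdc ?_
    obtain ⟨x, -, hx⟩ := mem_map.mp h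
    exact Subtype.ext (Prod.ext_iff.mp hx).2
  · simp

def colorFiberEquiv (C : Finset β) :
    {M : Multiset (α × β) // ∀ p ∈ M, p.2 ∈ C} ≃ (C → Multiset α) where
  toFun M c := colorFiber M.1 c
  invFun f := ⟨ofColorFibers C f, fun _ => snd_mem_of_mem_ofColorFibers⟩
  left_inv M := by
    classical
    ext ⟨a, c⟩
    by_cases hc : c ∈ C
    · exact (count_ofColorFibers C _ a ⟨c, hc⟩).trans (count_colorFiber _ a c)
    · rw [count_eq_zero_of_notMem fun h => hc (snd_mem_of_mem_ofColorFibers h),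
        count_eq_zero_of_notMem fun h => hc (M.2 _ h)]
  right_inv f := by
    classical
    ext c a
    exact (count_colorFiber _ a c.1).trans (count_ofColorFibers C f a c)

variable {C : Finset β} {M : Multiset (α × β)}

theorem ofColorFibers_colorFiber (hM : ∀ p ∈ M, p.2 ∈ C) :
    ofColorFibers C (fun c => colorFiber M c) = M :=
  congrArg Subtype.val ((colorFiberEquiv C).left_inv ⟨M, hM⟩)

theorem map_fst_eq_sum_colorFiber (hM : ∀ p ∈ M, p.2 ∈ C) :
    M.map Prod.fst = ∑ c : C, colorFiber M c := by
  conv_lhs => rw [← ofColorFibers_colorFiber hM]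
  exact map_fst_ofColorFibers C _

theorem nodup_iff_forall_colorFiber_nodup (hM : ∀ p ∈ M, p.2 ∈ C) :
    M.Nodup ↔ ∀ c : C, (colorFiber M c).Nodup := by
  classical
  simp only [nodup_iff_count_le_one, count_colorFiber]
  refine ⟨fun h c a => h _, fun h ⟨a, c⟩ => ?_⟩
  by_cases hc : c ∈ C
  · exact h ⟨c, hc⟩ a
  · rw [count_eq_zero_of_notMem fun h => hc (hM _ h)]
    exact zero_le_one

theorem forall_mem_iff_forall_colorFiber {P : α → Prop} (hM : ∀ p ∈ M, p.2 ∈ C) :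
    (∀ p ∈ M, P p.1) ↔ ∀ c : C, ∀ a ∈ colorFiber M c, P a :=
  ⟨fun h _ _ ha => h _ (mem_colorFiber.mp ha),
    fun h p hp => h ⟨p.2, hM p hp⟩ p.1 (mem_colorFiber.mpr hp)⟩

variable (C) in
def colorFiberSubtypeEquiv (Q : Multiset α → Prop) :
    {M : Multiset (α × β) // (∀ p ∈ M, p.2 ∈ C) ∧ ∀ c : C, Q (colorFiber M c)} ≃
      (C → {s // Q s}) :=
  (Equiv.subtypeSubtypeEquivSubtypeInter _
      (fun M : Multiset (α × β) => ∀ c : C, Q (colorFiber M c))).symm.trans <|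
    ((colorFiberEquiv C).subtypeEquiv fun _ => Iff.rfl).trans Equiv.subtypePiEquivPi

theorem natCard_colorFiber_congr {Q Q' : Multiset ℕ → Prop} (e : {s // Q s} ≃ {s // Q' s})
    (he : ∀ s, (e s).1.sum = s.1.sum) (n : ℕ) :
    Nat.card {M : Multiset (ℕ × β) //
        ((∀ p ∈ M, p.2 ∈ C) ∧ ∀ c : C, Q (colorFiber M c)) ∧ (M.map Prod.fst).sum = n} =
      Nat.card {M : Multiset (ℕ × β) //
        ((∀ p ∈ M, p.2 ∈ C) ∧ ∀ c : C, Q' (colorFiber M c)) ∧ (M.map Prod.fst).sum = n} := by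
  have weight (Q : Multiset ℕ → Prop) (M) :
      (M.1.map Prod.fst).sum = ∑ c, (colorFiberSubtypeEquiv C Q M c).1.sum := by
    rw [map_fst_eq_sum_colorFiber M.2.1, sum_sum]
    rfl
  let E := (colorFiberSubtypeEquiv C Q).trans
    ((Equiv.piCongrRight fun _ => e).trans (colorFiberSubtypeEquiv C Q').symm)
  have hE (M) : ((E M).1.map Prod.fst).sum = (M.1.map Prod.fst).sum := by
    rw [weight Q', weight Q]
    simp [E, he]
  exact Nat.card_congr <| (Equiv.subtypeSubtypeEquivSubtypeInter _ _).symm.trans <|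
    (E.subtypeEquiv fun M => by rw [hE]).trans (Equiv.subtypeSubtypeEquivSubtypeInter _ _)

end Multiset

def Nat.Partition.subtypeEquivMultiset (P : Multiset ℕ → Prop) (m : ℕ) :
    {s : {s : Multiset ℕ // (∀ i ∈ s, 0 < i) ∧ P s} // s.1.sum = m} ≃
      {p : m.Partition // P p.parts} where
  toFun s := ⟨⟨s.1.1, fun h => s.1.2.1 _ h, s.2⟩, s.1.2.2⟩
  invFun p := ⟨⟨p.1.parts, fun _ => p.1.parts_pos, p.2⟩, p.1.parts_sum⟩
  left_inv _ := rfl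
  right_inv _ := rfl

noncomputable def distinctOddEquiv :
    {s : Multiset ℕ // (∀ i ∈ s, 0 < i) ∧ s.Nodup} ≃
      {s : Multiset ℕ // (∀ i ∈ s, 0 < i) ∧ ∀ i ∈ s, ¬Even i} :=
  Equiv.ofFiberEquiv (f := fun s => s.1.sum) (g := fun s => s.1.sum) fun m =>
    (Nat.Partition.subtypeEquivMultiset _ m).trans <|
      (Fintype.equivOfCardEq <| by
        rw [Fintype.card_subtype, Fintype.card_subtype]
        exact (Nat.Partition.card_odds_eq_card_distincts m).symm).trans
      (Nat.Partition.subtypeEquivMultiset _ m).symm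

theorem sum_distinctOddEquiv (s : {s : Multiset ℕ // (∀ i ∈ s, 0 < i) ∧ s.Nodup}) :
    (distinctOddEquiv s).1.sum = s.1.sum :=
  Equiv.ofFiberEquiv_map (g := fun t : {s : Multiset ℕ // _ ∧ ∀ i ∈ s, ¬Even i} => t.1.sum) _ s

section ColoredPartition

variable {b : ℕ → ℕ} {k n : ℕ} {M : Multiset (ℕ × ℕ)} {p : ℕ × ℕ}

theorem IsColoredPartition.count_mul_fst_le (hM : IsColoredPartition b n M) (p : ℕ × ℕ) :
    M.count p * p.1 ≤ n := by
  obtain ⟨N, hN⟩ := Multiset.le_iff_exists_add.mp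
    ((Multiset.le_count_iff_replicate_le (a := p) (s := M)).mp le_rfl)
  rw [← hM.2]
  conv_rhs => rw [hN]
  simp

theorem IsColoredPartition.fst_le (hM : IsColoredPartition b n M) (hp : p ∈ M) : p.1 ≤ n :=
  (Nat.le_mul_of_pos_left _ (Multiset.count_pos.mpr hp)).trans (hM.count_mul_fst_le p)

theorem IsColoredPartition.count_le (hM : IsColoredPartition b n M) (p : ℕ × ℕ) :
    M.count p ≤ n := by
  by_cases hp : p ∈ M
  · exact (Nat.le_mul_of_pos_right _ (hM.1 p hp).1).trans (hM.count_mul_fst_le p)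
  · simp [Multiset.count_eq_zero_of_notMem hp]

theorem IsColoredPartition.card_filter_fst_eq (hM : IsColoredPartition b n M) (k : ℕ) :
    Multiset.card (M.filter (·.1 = k)) = ∑ c ∈ Icc 1 (b k), M.count (k, c) := by
  classical
  rw [← Multiset.sum_count_eq_card (s := ({k} : Finset ℕ) ×ˢ Icc 1 (b k)), sum_product,
    sum_singleton]
  · exact sum_congr rfl fun c _ => Multiset.count_filter_of_pos rfl
  · intro p hp
    obtain ⟨hpM, rfl⟩ := Multiset.mem_filter.mp hp
    simpa using (hM.1 p hpM).2

theorem finite_setOf_isColoredPartition (b : ℕ → ℕ) (n : ℕ) :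
    {M | IsColoredPartition b n M}.Finite := by
  classical
  let S := Icc 1 n ×ˢ Icc 1 ((Icc 1 n).sup b)
  refine (n • S.val).powerset.toFinset.finite_toSet.subset fun M hM => ?_
  simp only [Multiset.mem_toFinset, Multiset.mem_powerset, mem_coe]
  refine Multiset.le_iff_count.mpr fun p => ?_
  by_cases hp : p ∈ M
  · obtain ⟨h1, h2, h3⟩ := hM.1 p hp
    have hpS : p ∈ S := mem_product.mpr ⟨mem_Icc.mpr ⟨h1, hM.fst_le hp⟩,
      mem_Icc.mpr ⟨h2, h3.trans (le_sup (mem_Icc.mpr ⟨h1, hM.fst_le hp⟩))⟩⟩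
    rw [Multiset.count_nsmul, Multiset.count_eq_one_of_mem S.nodup hpS, mul_one]
    exact hM.count_le p
  · simp [Multiset.count_eq_zero_of_notMem hp]

noncomputable def coloredDistincts (b : ℕ → ℕ) (n : ℕ) : Finset (Multiset (ℕ × ℕ)) :=
  ((finite_setOf_isColoredPartition b n).subset
    (t := {M | IsColoredDistinctPartition b n M}) fun _ h => h.1).toFinset

noncomputable def coloredOdds (b : ℕ → ℕ) (n : ℕ) : Finset (Multiset (ℕ × ℕ)) :=
  ((finite_setOf_isColoredPartition b n).subset
    (t := {M | IsColoredOddPartition b n M}) fun _ h => h.1).toFinset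

@[simp]
theorem mem_coloredDistincts : M ∈ coloredDistincts b n ↔ IsColoredDistinctPartition b n M :=
  Set.Finite.mem_toFinset _

@[simp]
theorem mem_coloredOdds : M ∈ coloredOdds b n ↔ IsColoredOddPartition b n M :=
  Set.Finite.mem_toFinset _

theorem coloredhDist_eq_card : coloredhDist b n = #(coloredDistincts b n) :=
  Nat.card_eq_card_finite_toFinset _

theorem natCard_isColoredOddPartition :
    Nat.card {M // IsColoredOddPartition b n M} = #(coloredOdds b n) :=
  Nat.card_eq_card_finite_toFinset _

theorem coloredFDist_eq_sum :
    coloredFDist b k n = ∑ M ∈ coloredDistincts b n, Multiset.card (M.filter (·.1 = k)) :=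
  finsum_mem_eq_finite_toFinset_sum _ _

theorem coloredGOdd_eq_sum :
    coloredGOdd b k n = ∑ N ∈ coloredOdds b n, #(N.toFinset.filter fun p => k ≤ N.count p) :=
  finsum_mem_eq_finite_toFinset_sum _ _

theorem isColoredDistinctPartition_cons (hp : 0 < p.1 ∧ 1 ≤ p.2 ∧ p.2 ≤ b p.1) :
    IsColoredDistinctPartition b (n + p.1) (p ::ₘ M) ↔
      p ∉ M ∧ IsColoredDistinctPartition b n M := by
  simp only [IsColoredDistinctPartition, IsColoredPartition, Multiset.forall_mem_cons,
    Multiset.map_cons, Multiset.sum_cons, Multiset.nodup_cons, add_comm p.1, add_left_inj]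
  tauto

theorem card_filter_mem_coloredDistincts_add (hp : 0 < p.1 ∧ 1 ≤ p.2 ∧ p.2 ≤ b p.1) :
    #{M ∈ coloredDistincts b (n + p.1) | p ∈ M} = #{M ∈ coloredDistincts b n | p ∉ M} := by
  refine card_nbij' (·.erase p) (p ::ₘ ·) (fun M hM => ?_) (fun M hM => ?_)
    (fun M hM => Multiset.cons_erase (mem_filter.mp hM).2)
    (fun M _ => Multiset.erase_cons_head p M)
  · obtain ⟨hM, hpM⟩ := mem_filter.mp hM
    rw [mem_coloredDistincts, ← Multiset.cons_erase hpM, isColoredDistinctPartition_cons hp] at hM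
    exact mem_filter.mpr ⟨mem_coloredDistincts.mpr hM.2, hM.1⟩
  · obtain ⟨hM, hpM⟩ := mem_filter.mp hM
    refine mem_filter.mpr ⟨?_, Multiset.mem_cons_self p M⟩
    exact mem_coloredDistincts.mpr
      ((isColoredDistinctPartition_cons hp).mpr ⟨hpM, mem_coloredDistincts.mp hM⟩)

theorem coloredFDist_eq_sum_card (b : ℕ → ℕ) (k n : ℕ) :
    coloredFDist b k n = ∑ c ∈ Icc 1 (b k), #{M ∈ coloredDistincts b n | (k, c) ∈ M} := by
  classical
  have hcard : ∀ M ∈ coloredDistincts b n, Multiset.card (M.filter (·.1 = k)) =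
      ∑ c ∈ Icc 1 (b k), if (k, c) ∈ M then 1 else 0 := by
    intro M hM
    obtain ⟨hM, hnd⟩ := mem_coloredDistincts.mp hM
    simp only [hM.card_filter_fst_eq, Multiset.count_eq_of_nodup hnd]
  rw [coloredFDist_eq_sum, sum_congr rfl hcard, sum_comm]
  simp only [card_filter]

theorem coloredFDist_eq_zero (h : n < k) : coloredFDist b k n = 0 := by
  rw [coloredFDist_eq_sum_card]
  refine sum_eq_zero fun c _ => card_eq_zero.mpr (filter_eq_empty_iff.mpr fun M hM hkM => ?_)
  exact h.not_ge ((mem_coloredDistincts.mp hM).1.fst_le hkM)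

theorem coloredFDist_add_add_eq_mul_coloredhDist (hk : 0 < k) :
    coloredFDist b k (n + k) + coloredFDist b k n = b k * coloredhDist b n := by
  rw [coloredFDist_eq_sum_card, coloredFDist_eq_sum_card, ← sum_add_distrib, coloredhDist_eq_card]
  rw [sum_congr rfl fun c hc => ?_, sum_const, Nat.card_Icc, Nat.add_sub_cancel, smul_eq_mul]
  have hp : 0 < (k, c).1 ∧ 1 ≤ (k, c).2 ∧ (k, c).2 ≤ b (k, c).1 := ⟨hk, mem_Icc.mp hc⟩
  rw [card_filter_mem_coloredDistincts_add hp, add_comm]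
  exact card_filter_add_card_filter_not _

theorem isColoredOddPartition_add_replicate (hp : (0 < p.1 ∧ 1 ≤ p.2 ∧ p.2 ≤ b p.1) ∧ Odd p.1) :
    IsColoredOddPartition b (n + k * p.1) (M + Multiset.replicate k p) ↔
      IsColoredOddPartition b n M := by
  have hmem (P : ℕ × ℕ → Prop) (h : P p) :
      (∀ q ∈ M + Multiset.replicate k p, P q) ↔ ∀ q ∈ M, P q := by
    simp only [Multiset.mem_add, or_imp, forall_and]
    exact and_iff_left fun q hq => Multiset.eq_of_mem_replicate hq ▸ h
  have hw : ((M + Multiset.replicate k p).map Prod.fst).sum = (M.map Prod.fst).sum + k * p.1 := by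
    simp
  rw [IsColoredOddPartition, IsColoredPartition, hw, add_left_inj, hmem _ hp.1, hmem _ hp.2]
  rfl

theorem card_filter_le_count_coloredOdds_add
    (hp : (0 < p.1 ∧ 1 ≤ p.2 ∧ p.2 ≤ b p.1) ∧ Odd p.1) :
    #{N ∈ coloredOdds b (n + k * p.1) | k ≤ N.count p} = #(coloredOdds b n) := by
  refine card_nbij' (· - Multiset.replicate k p) (· + Multiset.replicate k p)
    (fun N hN => ?_) (fun N hN => ?_) (fun N hN => ?_) (fun N _ => add_tsub_cancel_right N _)
  · obtain ⟨hN, hpN⟩ := mem_filter.mp hN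
    rw [mem_coloredOdds, ← tsub_add_cancel_of_le (Multiset.le_count_iff_replicate_le.mp hpN),
      isColoredOddPartition_add_replicate hp] at hN
    exact mem_coloredOdds.mpr hN
  · refine mem_filter.mpr ⟨mem_coloredOdds.mpr ?_, by simp⟩
    exact (isColoredOddPartition_add_replicate hp).mpr (mem_coloredOdds.mp hN)
  · exact tsub_add_cancel_of_le (Multiset.le_count_iff_replicate_le.mp (mem_filter.mp hN).2)

theorem card_filter_le_count_coloredOdds (hp : (0 < p.1 ∧ 1 ≤ p.2 ∧ p.2 ≤ b p.1) ∧ Odd p.1) :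
    #{N ∈ coloredOdds b n | k ≤ N.count p} =
      if k * p.1 ≤ n then #(coloredOdds b (n - k * p.1)) else 0 := by
  split_ifs with h
  · obtain ⟨m, rfl⟩ := Nat.exists_eq_add_of_le' h
    rw [Nat.add_sub_cancel, card_filter_le_count_coloredOdds_add hp]
  · refine card_eq_zero.mpr (filter_eq_empty_iff.mpr fun N hN hkN => h ?_)
    exact (Nat.mul_le_mul_right _ hkN).trans ((mem_coloredOdds.mp hN).1.count_mul_fst_le p)

theorem coloredGOdd_eq_sum_card (hk : 0 < k) {T : Finset (ℕ × ℕ)}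
    (hT : ∀ N ∈ coloredOdds b n, ∀ p ∈ N, p ∈ T) :
    coloredGOdd b k n = ∑ p ∈ T, #{N ∈ coloredOdds b n | k ≤ N.count p} := by
  have hfilter : ∀ N ∈ coloredOdds b n,
      #(N.toFinset.filter fun p => k ≤ N.count p) = #{p ∈ T | k ≤ N.count p} := by
    intro N hN
    congr 1
    ext p
    simp only [mem_filter, Multiset.mem_toFinset]
    exact ⟨fun h => ⟨hT N hN p h.1, h.2⟩,
      fun h => ⟨Multiset.count_pos.mp (hk.trans_le h.2), h.2⟩⟩
  rw [coloredGOdd_eq_sum, sum_congr rfl hfilter]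
  exact sum_card_bipartiteAbove_eq_sum_card_bipartiteBelow _

end ColoredPartition

section ConstantColors

variable {b k n : ℕ} {M : Multiset (ℕ × ℕ)}

theorem isColoredPartition_const_iff :
    IsColoredPartition (fun _ => b) n M ↔
      ((∀ p ∈ M, p.2 ∈ Icc 1 b) ∧ ∀ c : Icc 1 b, ∀ i ∈ M.colorFiber c, 0 < i) ∧
        (M.map Prod.fst).sum = n := by
  simp only [IsColoredPartition, ← mem_Icc]
  refine and_congr_left' ⟨fun h => ?_, fun ⟨hC, hpos⟩ p hp => ?_⟩
  · have hC : ∀ p ∈ M, p.2 ∈ Icc 1 b := fun p hp => (h p hp).2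
    exact ⟨hC, (Multiset.forall_mem_iff_forall_colorFiber hC).mp fun p hp => (h p hp).1⟩
  · exact ⟨(Multiset.forall_mem_iff_forall_colorFiber hC).mpr hpos p hp, hC p hp⟩

theorem isColoredDistinctPartition_const_iff :
    IsColoredDistinctPartition (fun _ => b) n M ↔
      ((∀ p ∈ M, p.2 ∈ Icc 1 b) ∧
        ∀ c : Icc 1 b, (∀ i ∈ M.colorFiber c, 0 < i) ∧ (M.colorFiber c).Nodup) ∧
        (M.map Prod.fst).sum = n := by
  rw [IsColoredDistinctPartition, isColoredPartition_const_iff]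
  constructor
  · rintro ⟨⟨⟨hC, hpos⟩, hw⟩, hnd⟩
    exact ⟨⟨hC, fun c => ⟨hpos c, (Multiset.nodup_iff_forall_colorFiber_nodup hC).mp hnd c⟩⟩, hw⟩
  · rintro ⟨⟨hC, h⟩, hw⟩
    exact ⟨⟨⟨hC, fun c => (h c).1⟩, hw⟩,
      (Multiset.nodup_iff_forall_colorFiber_nodup hC).mpr fun c => (h c).2⟩

theorem isColoredOddPartition_const_iff :
    IsColoredOddPartition (fun _ => b) n M ↔
      ((∀ p ∈ M, p.2 ∈ Icc 1 b) ∧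
        ∀ c : Icc 1 b, (∀ i ∈ M.colorFiber c, 0 < i) ∧ ∀ i ∈ M.colorFiber c, ¬Even i) ∧
        (M.map Prod.fst).sum = n := by
  simp only [IsColoredOddPartition, isColoredPartition_const_iff, Nat.not_even_iff_odd]
  constructor
  · rintro ⟨⟨⟨hC, hpos⟩, hw⟩, hodd⟩
    exact ⟨⟨hC, fun c => ⟨hpos c, (Multiset.forall_mem_iff_forall_colorFiber hC).mp hodd c⟩⟩, hw⟩
  · rintro ⟨⟨hC, h⟩, hw⟩
    exact ⟨⟨⟨hC, fun c => (h c).1⟩, hw⟩,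
      (Multiset.forall_mem_iff_forall_colorFiber hC).mpr fun c => (h c).2⟩

theorem card_coloredDistincts_const :
    #(coloredDistincts (fun _ => b) n) = #(coloredOdds (fun _ => b) n) := by
  rw [← coloredhDist_eq_card, ← natCard_isColoredOddPartition, coloredhDist,
    Nat.card_congr (Equiv.subtypeEquivRight fun _ => isColoredDistinctPartition_const_iff),
    Nat.card_congr (Equiv.subtypeEquivRight fun _ => isColoredOddPartition_const_iff)]
  exact Multiset.natCard_colorFiber_congr distinctOddEquiv sum_distinctOddEquiv n

theorem coloredGOdd_const_eq_sum (hk : 0 < k) {R : ℕ} (hR : n ≤ R) :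
    coloredGOdd (fun _ => b) k n = ∑ i ∈ range R,
      b * if k * (2 * i + 1) ≤ n then #(coloredOdds (fun _ => b) (n - k * (2 * i + 1))) else 0 := by
  rw [coloredGOdd_eq_sum_card hk (T := (range R).image (2 * · + 1) ×ˢ Icc 1 b), sum_product,
    sum_image fun _ _ _ _ h => by omega]
  · refine sum_congr rfl fun i _ => ?_
    have hp (c : ℕ) (hc : c ∈ Icc 1 b) : (0 < 2 * i + 1 ∧ 1 ≤ c ∧ c ≤ b) ∧ Odd (2 * i + 1) :=
      ⟨⟨by omega, mem_Icc.mp hc⟩, odd_two_mul_add_one i⟩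
    rw [sum_congr rfl fun c hc => card_filter_le_count_coloredOdds (hp c hc)]
    simp only [sum_const, Nat.card_Icc, Nat.add_sub_cancel, smul_eq_mul]
  · intro N hN p hpN
    obtain ⟨hN, hodd⟩ := mem_coloredOdds.mp hN
    obtain ⟨i, hi⟩ := hodd p hpN
    have := hN.fst_le hpN
    simp only [mem_product, mem_image, mem_range, mem_Icc]
    exact ⟨⟨i, by omega, hi.symm⟩, (hN.1 p hpN).2⟩

theorem coloredGOdd_const_eq_zero (hk : 0 < k) (h : n < k) : coloredGOdd (fun _ => b) k n = 0 := by
  rw [coloredGOdd_const_eq_sum hk le_rfl]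
  refine sum_eq_zero fun i _ => ?_
  rw [if_neg, mul_zero]
  have : k ≤ k * (2 * i + 1) := Nat.le_mul_of_pos_right _ (Nat.succ_pos _)
  omega

theorem coloredGOdd_const_add (hk : 0 < k) (m : ℕ) :
    coloredGOdd (fun _ => b) k (m + k) =
      b * #(coloredOdds (fun _ => b) m) + coloredGOdd (fun _ => b) k (m - k) := by
  rw [coloredGOdd_const_eq_sum hk (Nat.le_succ (m + k)),
    coloredGOdd_const_eq_sum hk (R := m + k) (by omega), sum_range_succ', add_comm]
  congr 1
  · simp
  · refine sum_congr rfl fun i _ => ?_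
    have hshift : k * (2 * (i + 1) + 1) = k * (2 * i + 1) + 2 * k := by ring
    have hpos : k ≤ k * (2 * i + 1) := Nat.le_mul_of_pos_right _ (Nat.succ_pos _)
    rw [hshift]
    congr 1
    split_ifs <;> first | omega | (congr 2; omega)

end ConstantColors

theorem eq_of_add_shift_eq {α : Type*} [Add α] [IsRightCancelAdd α] {u v : ℕ → α} {k : ℕ}
    (hk : 0 < k) (hlt : ∀ n < k, u n = v n) (hshift : ∀ n, u (n + k) + u n = v (n + k) + v n) :
    u = v := by
  funext n
  induction n using Nat.strong_induction_on with
  | _ n ih =>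
    rcases lt_or_ge n k with hn | hn
    · exact hlt n hn
    · obtain ⟨m, rfl⟩ := Nat.exists_eq_add_of_le' hn
      have h := hshift m
      rw [ih m (by omega)] at h
      exact add_right_cancel h

theorem coloredFDist_eq_coloredGOdd_sub_general (b : ℕ) (n k : ℕ) (hk : 0 < k) :
    (coloredFDist (fun _ => b) k n : ℤ)
      = (coloredGOdd (fun _ => b) k n : ℤ) - (coloredGOdd (fun _ => b) k (n - k) : ℤ) := by
  refine congrFun (eq_of_add_shift_eq (u := fun n => (coloredFDist (fun _ => b) k n : ℤ))
    (v := fun n => (coloredGOdd (fun _ => b) k n : ℤ) - coloredGOdd (fun _ => b) k (n - k)) hk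
    (fun m hm => ?_) (fun m => ?_)) n
  · simp [coloredFDist_eq_zero hm, coloredGOdd_const_eq_zero hk hm,
      coloredGOdd_const_eq_zero hk (show m - k < k by omega)]
  · have hF := coloredFDist_add_add_eq_mul_coloredhDist (b := fun _ => b) (n := m) hk
    rw [coloredhDist_eq_card, card_coloredDistincts_const] at hF
    simp only [Nat.add_sub_cancel, coloredGOdd_const_add hk m]
    push_cast [← hF]
    ring

/-- `F^d_k(n) = G°_k(n) - G°_k(n - k)`. -/
theorem coloredFDist_eq_coloredGOdd_sub (b : ℕ) (hb : 0 < b) (n k : ℕ)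
    (hn : 0 < n) (hk : 0 < k) :
    (coloredFDist (fun _ => b) k n : ℤ)
      = (coloredGOdd (fun _ => b) k n : ℤ) - (coloredGOdd (fun _ => b) k (n - k) : ℤ) :=
  coloredFDist_eq_coloredGOdd_sub_general b n k hk
end

section
/- For every positive integer n and every k with 1 ≤ k ≤ n, in the set of partitions where each part j comes in j colors, F_k(n) = k · ( G_k(n) − G_k(n − k) ), where G_k(m) = 0 for m ≤ 0. -/
/-- `h n`: the number of colored partitions of `n` (so `h 0 = 1`). -/
noncomputable def coloredh (b : ℕ → ℕ) (n : ℕ) : ℕ := Nat.card {M // IsColoredPartition b n M}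

/-- `F k n`: the total number of parts with first coordinate `k`, counted with multiplicity,
over all colored partitions of `n`. -/
noncomputable def coloredF (b : ℕ → ℕ) (k n : ℕ) : ℕ :=
  ∑ᶠ M ∈ {M | IsColoredPartition b n M}, (Multiset.filter (fun p => p.1 = k) M).card

/-- `G k n`: the total number of distinct colored parts occurring with multiplicity at least
`k`, summed over all colored partitions of `n`. -/
noncomputable def coloredG (b : ℕ → ℕ) (k n : ℕ) : ℕ :=
  ∑ᶠ M ∈ {M | IsColoredPartition b n M},
    (M.toFinset.filter fun p => k ≤ M.count p).card

open Finset

theorem Finset.sum_eq_sum_Icc_card_filter_le {α : Type*} {s : Finset α} {f : α → ℕ} {N : ℕ}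
    (hf : ∀ x ∈ s, f x ≤ N) : ∑ x ∈ s, f x = ∑ r ∈ Icc 1 N, #{x ∈ s | r ≤ f x} := by
  calc ∑ x ∈ s, f x = ∑ x ∈ s, #{r ∈ Icc 1 N | r ≤ f x} := sum_congr rfl fun x hx => by
        rw [show {r ∈ Icc 1 N | r ≤ f x} = Icc 1 (f x) from ?_, Nat.card_Icc, Nat.add_sub_cancel]
        ext r
        simp only [mem_filter, mem_Icc]
        have := hf x hx
        omega
      _ = _ := sum_card_bipartiteAbove_eq_sum_card_bipartiteBelow fun x r => r ≤ f x

theorem Finset.sum_Icc_nsmul_eq_sum_Icc_nsmul_succ_add {A : Type*} [AddCommMonoid A] (T : ℕ → A)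
    (n : ℕ) :
    ∑ j ∈ Icc 1 (n + 1), j • T j = ∑ j ∈ Icc 1 n, j • T (j + 1) + ∑ j ∈ Icc 1 (n + 1), T j := by
  induction n with
  | zero => simp
  | succ n ih =>
    rw [sum_Icc_succ_top (b := n + 1) (by omega) fun j => j • T j, ih,
      sum_Icc_succ_top (b := n) (by omega) fun j => j • T (j + 1),
      sum_Icc_succ_top (b := n + 1) (by omega) T, succ_nsmul]
    abel

def coloredParts (b : ℕ → ℕ) (N : ℕ) : Finset (ℕ × ℕ) :=
  (Icc 1 N).biUnion fun j => {j} ×ˢ Icc 1 (b j)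

/-- The paper's `h(m - d)`, where `h` vanishes at negative arguments. -/
noncomputable def coloredhSub (b : ℕ → ℕ) (m d : ℕ) : ℕ :=
  if d ≤ m then coloredh b (m - d) else 0

section

variable {b : ℕ → ℕ} {k m n N : ℕ} {M : Multiset (ℕ × ℕ)} {q : ℕ × ℕ}

lemma mem_coloredParts : q ∈ coloredParts b N ↔ q.1 ∈ Icc 1 N ∧ q.2 ∈ Icc 1 (b q.1) := by
  simp [coloredParts, Prod.ext_iff]

lemma coloredhSub_sub (hkn : k ≤ n) (d : ℕ) :
    coloredhSub b (n - k) d = coloredhSub b n (d + k) := by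
  unfold coloredhSub
  split_ifs <;> first | omega | rw [Nat.sub_sub, add_comm]

lemma sum_map_fst_add_replicate (M : Multiset (ℕ × ℕ)) (r : ℕ) (q : ℕ × ℕ) :
    ((M + Multiset.replicate r q).map Prod.fst).sum = (M.map Prod.fst).sum + r * q.1 := by
  simp [Multiset.map_replicate]

namespace IsColoredPartition

lemma card_le (hM : IsColoredPartition b n M) : Multiset.card M ≤ n := by
  have : Multiset.card (M.map Prod.fst) • 1 ≤ (M.map Prod.fst).sum :=
    Multiset.card_nsmul_le_sum fun x hx => by
      obtain ⟨p, hp, rfl⟩ := Multiset.mem_map.1 hx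
      exact (hM.1 p hp).1
  simpa [hM.2] using this

lemma mem_coloredParts (hM : IsColoredPartition b m M) (hmN : m ≤ N) (hq : q ∈ M) :
    q ∈ coloredParts b N := by
  have hq₁ : q.1 ≤ m := hM.2 ▸ Multiset.le_sum_of_mem (Multiset.mem_map_of_mem _ hq)
  obtain ⟨h₁, h₂, h₃⟩ := hM.1 q hq
  exact _root_.mem_coloredParts.2 ⟨mem_Icc.2 ⟨h₁, hq₁.trans hmN⟩, mem_Icc.2 ⟨h₂, h₃⟩⟩

lemma le_nsmul_coloredParts (hM : IsColoredPartition b n M) :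
    M ≤ n • (coloredParts b n).val := by
  refine Multiset.le_iff_count.2 fun q => ?_
  by_cases hq : q ∈ M
  · rw [Multiset.count_nsmul, Multiset.count_eq_one_of_mem (coloredParts b n).nodup
      (hM.mem_coloredParts le_rfl hq), mul_one]
    exact (Multiset.count_le_card q M).trans hM.card_le
  · simp [Multiset.count_eq_zero_of_notMem hq]

lemma filter_toFinset_eq (hk : 0 < k) (hM : IsColoredPartition b m M) (hmN : m ≤ N) :
    {q ∈ M.toFinset | k ≤ M.count q} = {q ∈ coloredParts b N | k ≤ M.count q} := by
  ext q
  simp only [mem_filter, Multiset.mem_toFinset, and_congr_left_iff]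
  intro hkq
  exact ⟨hM.mem_coloredParts hmN, fun _ => Multiset.count_pos.1 (hk.trans_le hkq)⟩

lemma card_filter_fst_eq_s15 (hM : IsColoredPartition b n M) (k : ℕ) :
    Multiset.card (M.filter fun p => p.1 = k) = ∑ c ∈ Icc 1 (b k), M.count (k, c) := by
  have hsupp : ∀ p ∈ M.filter fun p => p.1 = k, p ∈ ({k} : Finset ℕ) ×ˢ Icc 1 (b k) := by
    intro p hp
    obtain ⟨hpM, rfl⟩ := Multiset.mem_filter.1 hp
    obtain ⟨-, h₂, h₃⟩ := hM.1 p hpM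
    exact mem_product.2 ⟨mem_singleton_self _, mem_Icc.2 ⟨h₂, h₃⟩⟩
  rw [← Multiset.sum_count_eq_card hsupp, sum_product, sum_singleton]
  exact sum_congr rfl fun c _ => Multiset.count_filter_of_pos rfl

end IsColoredPartition

variable (b) in
lemma setOf_isColoredPartition_finite (n : ℕ) : {M | IsColoredPartition b n M}.Finite :=
  (Multiset.finite_toSet (n • (coloredParts b n).val).powerset).subset fun _ hM =>
    Multiset.mem_powerset.2 (IsColoredPartition.le_nsmul_coloredParts hM)

variable (b) in
noncomputable def coloredPartitions (n : ℕ) : Finset (Multiset (ℕ × ℕ)) :=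
  (setOf_isColoredPartition_finite b n).toFinset

lemma mem_coloredPartitions : M ∈ coloredPartitions b n ↔ IsColoredPartition b n M :=
  Set.Finite.mem_toFinset _

lemma card_coloredPartitions : #(coloredPartitions b n) = coloredh b n :=
  (Nat.card_eq_card_finite_toFinset _).symm

lemma isColoredPartition_add_replicate_iff (hq₁ : 0 < q.1) (hq₂ : q.2 ∈ Icc 1 (b q.1)) (r : ℕ) :
    IsColoredPartition b (m + r * q.1) (M + Multiset.replicate r q) ↔ IsColoredPartition b m M := by
  have hrep : ∀ p ∈ Multiset.replicate r q, 0 < p.1 ∧ 1 ≤ p.2 ∧ p.2 ≤ b p.1 := fun p hp =>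
    Multiset.eq_of_mem_replicate hp ▸ ⟨hq₁, mem_Icc.1 hq₂⟩
  rw [IsColoredPartition, IsColoredPartition, sum_map_fst_add_replicate, Nat.add_right_cancel_iff]
  exact and_congr_left fun _ => ⟨fun h p hp => h p (Multiset.mem_add.2 (.inl hp)),
    fun h p hp => (Multiset.mem_add.1 hp).elim (h p) (hrep p)⟩

lemma image_add_replicate_coloredPartitions (hq₁ : 0 < q.1) (hq₂ : q.2 ∈ Icc 1 (b q.1)) (r : ℕ) :
    (coloredPartitions b m).image (· + Multiset.replicate r q)
      = {M ∈ coloredPartitions b (m + r * q.1) | r ≤ M.count q} := by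
  ext M
  simp only [mem_image, mem_filter, mem_coloredPartitions]
  constructor
  · rintro ⟨M', hM', rfl⟩
    exact ⟨(isColoredPartition_add_replicate_iff hq₁ hq₂ r).2 hM', by simp⟩
  · rintro ⟨hM, hr⟩
    have hle := tsub_add_cancel_of_le (Multiset.le_count_iff_replicate_le.1 hr)
    refine ⟨M - Multiset.replicate r q, ?_, hle⟩
    rw [← isColoredPartition_add_replicate_iff hq₁ hq₂ r, hle]
    exact hM

lemma card_filter_le_count_coloredPartitions (hq₁ : 0 < q.1) (hq₂ : q.2 ∈ Icc 1 (b q.1)) (r n : ℕ) :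
    #{M ∈ coloredPartitions b n | r ≤ M.count q} = coloredhSub b n (r * q.1) := by
  unfold coloredhSub
  split_ifs with h
  · obtain ⟨m, rfl⟩ := Nat.exists_eq_add_of_le' h
    rw [Nat.add_sub_cancel, ← image_add_replicate_coloredPartitions hq₁ hq₂,
      card_image_of_injective _ (add_left_injective _), card_coloredPartitions]
  · refine card_eq_zero.2 (filter_eq_empty_iff.2 fun M hM hr => h ?_)
    obtain ⟨M', rfl⟩ := Multiset.le_iff_exists_add.1 (Multiset.le_count_iff_replicate_le.1 hr)
    have := (mem_coloredPartitions.1 hM).2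
    rw [add_comm, sum_map_fst_add_replicate] at this
    omega

lemma sum_count_coloredPartitions (hq₁ : 0 < q.1) (hq₂ : q.2 ∈ Icc 1 (b q.1))
    (hnN : n ≤ N) :
    ∑ M ∈ coloredPartitions b n, M.count q = ∑ r ∈ Icc 1 N, coloredhSub b n (r * q.1) := by
  rw [sum_eq_sum_Icc_card_filter_le fun M hM =>
    (Multiset.count_le_card q M).trans ((mem_coloredPartitions.1 hM).card_le.trans hnN)]
  exact sum_congr rfl fun r _ => card_filter_le_count_coloredPartitions hq₁ hq₂ r n

lemma coloredF_eq_mul_sum (hk : 0 < k) (hnN : n ≤ N) :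
    coloredF b k n = b k * ∑ r ∈ Icc 1 N, coloredhSub b n (r * k) := by
  rw [coloredF, finsum_mem_eq_finite_toFinset_sum _ (setOf_isColoredPartition_finite b n)]
  calc ∑ M ∈ coloredPartitions b n, Multiset.card (M.filter fun p => p.1 = k)
      = ∑ M ∈ coloredPartitions b n, ∑ c ∈ Icc 1 (b k), M.count (k, c) :=
        sum_congr rfl fun M hM => (mem_coloredPartitions.1 hM).card_filter_fst_eq_s15 k
    _ = ∑ c ∈ Icc 1 (b k), ∑ M ∈ coloredPartitions b n, M.count (k, c) := sum_comm
    _ = ∑ c ∈ Icc 1 (b k), ∑ r ∈ Icc 1 N, coloredhSub b n (r * k) :=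
        sum_congr rfl fun c hc => sum_count_coloredPartitions hk hc hnN
    _ = b k * ∑ r ∈ Icc 1 N, coloredhSub b n (r * k) := by
        rw [sum_const, Nat.card_Icc, Nat.add_sub_cancel, smul_eq_mul]

lemma coloredG_eq_sum (hk : 0 < k) (hnN : n ≤ N) :
    coloredG b k n = ∑ j ∈ Icc 1 N, b j * coloredhSub b n (k * j) := by
  rw [coloredG, finsum_mem_eq_finite_toFinset_sum _ (setOf_isColoredPartition_finite b n)]
  calc ∑ M ∈ coloredPartitions b n, #{q ∈ M.toFinset | k ≤ M.count q}
      = ∑ M ∈ coloredPartitions b n, #{q ∈ coloredParts b N | k ≤ M.count q} :=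
        sum_congr rfl fun M hM => by
          rw [(mem_coloredPartitions.1 hM).filter_toFinset_eq hk hnN]
    _ = ∑ q ∈ coloredParts b N, #{M ∈ coloredPartitions b n | k ≤ M.count q} :=
        sum_card_bipartiteAbove_eq_sum_card_bipartiteBelow
          fun (M : Multiset (ℕ × ℕ)) q => k ≤ M.count q
    _ = ∑ q ∈ coloredParts b N, coloredhSub b n (k * q.1) :=
        sum_congr rfl fun q hq => by
          obtain ⟨hq₁, hq₂⟩ := mem_coloredParts.1 hq
          exact card_filter_le_count_coloredPartitions (mem_Icc.1 hq₁).1 hq₂ k n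
    _ = ∑ j ∈ Icc 1 N, ∑ _c ∈ Icc 1 (b j), coloredhSub b n (k * j) :=
        sum_finset_product _ _ _ fun _ => mem_coloredParts
    _ = ∑ j ∈ Icc 1 N, b j * coloredhSub b n (k * j) := by
        simp only [sum_const, Nat.card_Icc, Nat.add_sub_cancel, smul_eq_mul]

end

theorem coloredF_eq_k_mul_sub_general (n k : ℕ) (hk : 1 ≤ k) (hkn : k ≤ n) :
    (coloredF (fun j => j) k n : ℤ)
      = k * ((coloredG (fun j => j) k n : ℤ) - (coloredG (fun j => j) k (n - k) : ℤ)) := by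
  set T : ℕ → ℕ := fun j => coloredhSub (fun j => j) n (k * j)
  have hF : coloredF (fun j => j) k n = k * ∑ j ∈ Icc 1 (n + 1), T j := by
    simp only [coloredF_eq_mul_sum hk n.le_succ, T, mul_comm _ k]
  have hGn : coloredG (fun j => j) k n = ∑ j ∈ Icc 1 (n + 1), j • T j :=
    coloredG_eq_sum hk n.le_succ
  have hGnk : coloredG (fun j => j) k (n - k) = ∑ j ∈ Icc 1 n, j • T (j + 1) := by
    simp only [coloredG_eq_sum hk (n.sub_le k), T, coloredhSub_sub hkn, mul_add_one, smul_eq_mul]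
  rw [hF, hGn, hGnk, sum_Icc_nsmul_eq_sum_Icc_nsmul_succ_add]
  push_cast
  ring

/-- For partitions where each part `j` comes in `j` colors,
`F_k(n) = k · (G_k(n) - G_k(n - k))`. -/
theorem coloredF_eq_k_mul_sub (n k : ℕ) (hn : 0 < n) (hk : 1 ≤ k) (hkn : k ≤ n) :
    (coloredF (fun j => j) k n : ℤ)
      = k * ((coloredG (fun j => j) k n : ℤ) - (coloredG (fun j => j) k (n - k) : ℤ)) :=
  coloredF_eq_k_mul_sub_general n k hk hkn
end
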